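/- arXiv:2409.04351 — 4 statements merged into one kernel-verified Lean document; each statement's English description precedes it below -/
import Mathlib

section
/- If K is a mixing kernel with constant ε (i.e., there exists a non-negative measure λ with ε·λ(A) ≤ K(x,A) ≤ (1/ε)·λ(A) for all x and measurable A, where 0 < ε ≤ 1), then for any two probability measures μ, ν, the pushed-forward measures Kμ and Kν (defined by (Kμ)(A) = ∫ K(x,A) dμ(x)) satisfy h(Kμ, Kν) ≤ (1/ε²)·‖μ − ν‖_TV, where h is the Hilbert projective metric. -/
open MeasureTheory ProbabilityTheory

/-- Total variation distance `‖μ−ν‖_TV = 2 sup_A |μ(A) − ν(A)|`. -/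
noncomputable def tvDist {X : Type*} [MeasurableSpace X] (μ ν : Measure X) : ℝ :=
  2 * ⨆ A : {A : Set X // MeasurableSet A}, |(μ A.1).toReal - (ν A.1).toReal|

/-- Hilbert projective metric. -/
noncomputable def hilbertMetric {X : Type*} [MeasurableSpace X] (μ ν : Measure X) : ℝ :=
  Real.log
    ((⨆ A : {A : Set X // MeasurableSet A ∧ ν A ≠ 0}, (μ A.1).toReal / (ν A.1).toReal) /
      (⨅ A : {A : Set X // MeasurableSet A ∧ ν A ≠ 0}, (μ A.1).toReal / (ν A.1).toReal))

/-- A kernel `K` is mixing with constant `ε ∈ (0,1]`: there is a non-negative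
measure `λ` with `ε·λ(A) ≤ K(x,A) ≤ ε⁻¹·λ(A)` for every `x` and measurable `A`. -/
def MixingKernel {X : Type*} [MeasurableSpace X] (K : Kernel X X) (ε : ℝ) : Prop :=
  0 < ε ∧ ε ≤ 1 ∧ ∃ lam : Measure X, ∀ x : X, ∀ A : Set X, MeasurableSet A →
    ENNReal.ofReal ε * lam A ≤ K x A ∧ K x A ≤ (ENNReal.ofReal ε)⁻¹ * lam A

/-!
Write `t = ‖μ - ν‖_TV / 2` and, for a measurable `A`, `a = ε λ(A)`, so that
`a ≤ K(x, A) ≤ ε⁻² a`. The positive part `μ - ν` of the Hahn–Jordan decomposition has mass at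
most `t`, and integrating `K(·, A) - a ≤ (ε⁻² - 1) a` against it gives
`Kμ(A) ≤ Kν(A) + (ε⁻² - 1) a t ≤ R · Kν(A)` with `R = 1 + (ε⁻² - 1) t`, because `a ≤ Kν(A)`.
By symmetry every ratio `Kμ(A) / Kν(A)` lies in `[R⁻¹, R]`, hence
`h(Kμ, Kν) ≤ 2 log R ≤ 2 (R - 1) ≤ ε⁻² ‖μ - ν‖_TV`.
-/

open scoped ENNReal
open Set

theorem Real.log_iSup_div_iInf_le_two_mul_log {ι : Type*} {f : ι → ℝ} {R : ℝ} (hR : 1 ≤ R)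
    (hf : ∀ i, f i = 0 ∨ f i ∈ Icc R⁻¹ R) :
    Real.log ((⨆ i, f i) / ⨅ i, f i) ≤ 2 * Real.log R := by
  have hR₀ : 0 < R := zero_lt_one.trans_le hR
  have hf₀ : ∀ i, 0 ≤ f i := fun i ↦ (hf i).elim (·.ge) fun h ↦ (inv_pos.2 hR₀).le.trans h.1
  rcases (Real.iInf_nonneg hf₀).eq_or_lt with hinf | hinf
  · rw [← hinf, div_zero, Real.log_zero]
    exact mul_nonneg zero_le_two (Real.log_nonneg hR)
  have : Nonempty ι := by
    by_contra h
    rw [not_nonempty_iff] at h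
    simp [Real.iInf_of_isEmpty] at hinf
  have hbdd : BddBelow (range f) := ⟨0, forall_mem_range.2 hf₀⟩
  have hmem : ∀ i, f i ∈ Icc R⁻¹ R := fun i ↦
    (hf i).resolve_left fun h ↦ (ciInf_le hbdd i).not_gt (h ▸ hinf)
  have hsup : ⨆ i, f i ≤ R := ciSup_le fun i ↦ (hmem i).2
  have hinf' : R⁻¹ ≤ ⨅ i, f i := le_ciInf fun i ↦ (hmem i).1
  have hsup₀ : 0 < ⨆ i, f i :=
    hinf.trans_le (ciInf_le_ciSup hbdd ⟨R, forall_mem_range.2 fun i ↦ (hmem i).2⟩)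
  calc Real.log ((⨆ i, f i) / ⨅ i, f i) ≤ Real.log (R / R⁻¹) :=
        Real.log_le_log (div_pos hsup₀ hinf) (div_le_div₀ hR₀.le hsup (by positivity) hinf')
    _ = 2 * Real.log R := by rw [div_inv_eq_mul, Real.log_mul hR₀.ne' hR₀.ne', two_mul]

theorem hilbertMetric_le_two_mul_log {X : Type*} [MeasurableSpace X] {μ ν : Measure X} {R : ℝ}
    (hR : 1 ≤ R) (hμν : ∀ A, MeasurableSet A → μ A ≤ ENNReal.ofReal R * ν A)
    (hνμ : ∀ A, MeasurableSet A → ν A ≤ ENNReal.ofReal R * μ A) :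
    hilbertMetric μ ν ≤ 2 * Real.log R := by
  refine Real.log_iSup_div_iInf_le_two_mul_log hR fun ⟨A, hA, hνA⟩ ↦ ?_
  by_cases hνA_top : ν A = ∞
  · -- then `μ A = ∞` too, and the ratio is the junk value `0 / 0 = 0`
    have hμA_top : μ A = ∞ :=
      (by simpa [hνA_top, ENNReal.mul_eq_top] using hνμ A hA : 0 < R ∧ μ A = ∞).2
    simp [hνA_top, hμA_top]
  have hR₀ : 0 < R := zero_lt_one.trans_le hR
  have hμA_top : μ A ≠ ∞ :=
    ne_top_of_le_ne_top (ENNReal.mul_ne_top ENNReal.ofReal_ne_top hνA_top) (hμν A hA)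
  have hνA_pos : 0 < (ν A).toReal := ENNReal.toReal_pos hνA hνA_top
  have toReal_le {a b : ℝ≥0∞} (hb : b ≠ ∞) (h : a ≤ ENNReal.ofReal R * b) :
      a.toReal ≤ R * b.toReal := by
    simpa [ENNReal.toReal_mul, hR₀.le] using
      ENNReal.toReal_mono (ENNReal.mul_ne_top ENNReal.ofReal_ne_top hb) h
  right
  constructor
  · rw [le_div_iff₀ hνA_pos, inv_mul_le_iff₀ hR₀]
    exact toReal_le hμA_top (hνμ A hA)
  · rw [div_le_iff₀ hνA_pos]
    exact toReal_le hνA_top (hμν A hA)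

theorem tvDist_comm {α : Type*} [MeasurableSpace α] (μ ν : Measure α) :
    tvDist μ ν = tvDist ν μ := by
  simp only [tvDist, abs_sub_comm]

section FiniteMeasures

variable {α : Type*} [MeasurableSpace α] {μ ν : Measure α} [IsFiniteMeasure μ] [IsFiniteMeasure ν]

theorem abs_toReal_sub_le_half_tvDist {A : Set α} (hA : MeasurableSet A) :
    |(μ A).toReal - (ν A).toReal| ≤ tvDist μ ν / 2 := by
  have hbdd : BddAbove (range fun A : {A : Set α // MeasurableSet A} ↦
      |(μ A.1).toReal - (ν A.1).toReal|) := by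
    refine ⟨(μ univ).toReal + (ν univ).toReal, forall_mem_range.2 fun A ↦ ?_⟩
    refine (abs_sub _ _).trans (add_le_add ?_ ?_)
    · simpa using measure_mono (μ := μ) (subset_univ A.1)
    · simpa using measure_mono (μ := ν) (subset_univ A.1)
  rw [tvDist, mul_div_cancel_left₀ _ two_ne_zero]
  exact le_ciSup hbdd ⟨A, hA⟩

theorem measure_le_add_half_tvDist {A : Set α} (hA : MeasurableSet A) :
    μ A ≤ ν A + ENNReal.ofReal (tvDist μ ν / 2) := by
  have h := (abs_le.1 (abs_toReal_sub_le_half_tvDist (μ := μ) (ν := ν) hA)).2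
  calc μ A = ENNReal.ofReal (μ A).toReal := (ENNReal.ofReal_toReal (measure_ne_top μ A)).symm
    _ ≤ ENNReal.ofReal ((ν A).toReal + tvDist μ ν / 2) := ENNReal.ofReal_le_ofReal (by linarith)
    _ ≤ ν A + ENNReal.ofReal (tvDist μ ν / 2) := by
      grw [ENNReal.ofReal_add_le, ENNReal.ofReal_toReal (measure_ne_top ν A)]

theorem MeasureTheory.Measure.sub_apply_univ_le {t : ℝ≥0∞}
    (ht : ∀ B, MeasurableSet B → μ B ≤ ν B + t) : (μ - ν) univ ≤ t := by
  obtain ⟨s, hs⟩ := exists_isHahnDecomposition ν μ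
  have hsub : (μ - ν).restrict s = μ.restrict s - ν.restrict s :=
    Measure.restrict_sub_eq_restrict_sub_restrict hs.measurableSet
  calc (μ - ν) univ = (μ - ν) s + (μ - ν) sᶜ := (measure_add_measure_compl hs.measurableSet).symm
    _ = μ s - ν s := by
      rw [Measure.sub_apply_eq_zero_of_isHahnDecomposition hs.compl, add_zero,
        ← Measure.restrict_apply_univ, hsub, Measure.sub_apply MeasurableSet.univ hs.le_on,
        Measure.restrict_apply_univ, Measure.restrict_apply_univ]
    _ ≤ t := tsub_le_iff_left.2 (ht s hs.measurableSet)

theorem lintegral_le_lintegral_add_mul {f : α → ℝ≥0∞} {M t : ℝ≥0∞} (hf : ∀ x, f x ≤ M)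
    (ht : ∀ B, MeasurableSet B → μ B ≤ ν B + t) :
    ∫⁻ x, f x ∂μ ≤ ∫⁻ x, f x ∂ν + M * t :=
  calc ∫⁻ x, f x ∂μ ≤ ∫⁻ x, f x ∂(μ - ν + ν) :=
        lintegral_mono' (Measure.sub_le_iff_le_add.1 le_rfl) le_rfl
    _ = ∫⁻ x, f x ∂(μ - ν) + ∫⁻ x, f x ∂ν := lintegral_add_measure _ _ _
    _ ≤ M * (μ - ν) univ + ∫⁻ x, f x ∂ν := by
      grw [lintegral_mono hf, lintegral_const]
    _ ≤ ∫⁻ x, f x ∂ν + M * t := by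
      grw [Measure.sub_apply_univ_le ht, add_comm]

end FiniteMeasures

theorem MeasureTheory.Measure.bind_apply_le_ofReal_mul_bind_apply {α β : Type*}
    [MeasurableSpace α] [MeasurableSpace β] {μ ν : Measure α}
    [IsProbabilityMeasure μ] [IsProbabilityMeasure ν]
    {K : Kernel α β} {A : Set β} (hA : MeasurableSet A) {a : ℝ≥0∞} {s t : ℝ} (hs : 1 ≤ s)
    (ht₀ : 0 ≤ t) (ha : ∀ x, a ≤ K x A) (hsa : ∀ x, K x A ≤ ENNReal.ofReal s * a)
    (ht : ∀ B, MeasurableSet B → μ B ≤ ν B + ENNReal.ofReal t) :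
    (μ.bind K) A ≤ ENNReal.ofReal (1 + (s - 1) * t) * (ν.bind K) A := by
  rw [Measure.bind_apply hA K.aemeasurable, Measure.bind_apply hA K.aemeasurable]
  have lintegral_eq (ρ : Measure α) [IsProbabilityMeasure ρ] :
      ∫⁻ x, K x A ∂ρ = ∫⁻ x, (K x A - a) ∂ρ + a := by
    calc ∫⁻ x, K x A ∂ρ = ∫⁻ x, (K x A - a + a) ∂ρ := by simp_rw [tsub_add_cancel_of_le (ha _)]
      _ = ∫⁻ x, (K x A - a) ∂ρ + a := by simp [lintegral_add_right _ measurable_const]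
  have hexcess : ∀ x, K x A - a ≤ ENNReal.ofReal (s - 1) * a := fun x ↦ by
    rw [tsub_le_iff_left, ← one_add_mul, ← ENNReal.ofReal_one,
      ← ENNReal.ofReal_add zero_le_one (by linarith), add_sub_cancel]
    exact hsa x
  have hνa : a ≤ ∫⁻ x, K x A ∂ν := by
    simpa using lintegral_mono (μ := ν) ha
  calc ∫⁻ x, K x A ∂μ
        ≤ ∫⁻ x, (K x A - a) ∂ν + ENNReal.ofReal (s - 1) * a * ENNReal.ofReal t + a := by
        grw [lintegral_eq, lintegral_le_lintegral_add_mul hexcess ht]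
    _ = ∫⁻ x, K x A ∂ν + ENNReal.ofReal ((s - 1) * t) * a := by
        rw [lintegral_eq, ENNReal.ofReal_mul (by linarith)]
        ring
    _ ≤ ENNReal.ofReal (1 + (s - 1) * t) * ∫⁻ x, K x A ∂ν := by
        grw [hνa]
        rw [ENNReal.ofReal_add zero_le_one (by nlinarith), ENNReal.ofReal_one, add_mul, one_mul]

theorem MixingKernel.exists_le_kernel_le_ofReal_mul {X : Type*} [MeasurableSpace X]
    {K : Kernel X X} {ε : ℝ}
    (hK : MixingKernel K ε) : ∃ lam : Measure X, ∀ x A, MeasurableSet A →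
      ENNReal.ofReal ε * lam A ≤ K x A ∧
        K x A ≤ ENNReal.ofReal (1 / ε ^ 2) * (ENNReal.ofReal ε * lam A) := by
  obtain ⟨hε, -, lam, hlam⟩ := hK
  refine ⟨lam, fun x A hA ↦ ⟨(hlam x A hA).1, ?_⟩⟩
  rw [← mul_assoc, ← ENNReal.ofReal_mul (by positivity), show 1 / ε ^ 2 * ε = ε⁻¹ by field_simp,
    ENNReal.ofReal_inv_of_pos hε]
  exact (hlam x A hA).2

/-- If `K` is mixing with constant `ε`, then for any two probability measures `μ, ν`,
`h(Kμ, Kν) ≤ ε⁻²·‖μ − ν‖_TV`, where `(Kμ)(A) = ∫ K(x,A) dμ(x)`. -/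
theorem hilbert_bind_le_tv {X : Type*} [MeasurableSpace X] (K : Kernel X X) (ε : ℝ)
    (hK : MixingKernel K ε) (μ ν : Measure X)
    [IsProbabilityMeasure μ] [IsProbabilityMeasure ν] :
    hilbertMetric (μ.bind (fun x => K x)) (ν.bind (fun x => K x)) ≤ (1 / ε ^ 2) * tvDist μ ν := by
  obtain ⟨lam, hlam⟩ := hK.exists_le_kernel_le_ofReal_mul
  have hs : 1 ≤ 1 / ε ^ 2 := one_le_one_div (pow_pos hK.1 2) (pow_le_one₀ hK.1.le hK.2.1)
  have ht₀ : 0 ≤ tvDist μ ν / 2 :=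
    (abs_nonneg _).trans (abs_toReal_sub_le_half_tvDist (μ := μ) (ν := ν) MeasurableSet.empty)
  set R := 1 + (1 / ε ^ 2 - 1) * (tvDist μ ν / 2) with hR_def
  have hR : 1 ≤ R := le_add_of_nonneg_right (mul_nonneg (by linarith) ht₀)
  have bind_le (ρ σ : Measure X) [IsProbabilityMeasure ρ] [IsProbabilityMeasure σ]
      (hρσ : tvDist ρ σ = tvDist μ ν) (A : Set X) (hA : MeasurableSet A) :
      (ρ.bind K) A ≤ ENNReal.ofReal R * (σ.bind K) A :=
    Measure.bind_apply_le_ofReal_mul_bind_apply hA hs ht₀ (fun x ↦ (hlam x A hA).1)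
      (fun x ↦ (hlam x A hA).2) (hρσ ▸ fun B ↦ measure_le_add_half_tvDist)
  calc hilbertMetric (μ.bind K) (ν.bind K) ≤ 2 * Real.log R :=
        hilbertMetric_le_two_mul_log hR (bind_le μ ν rfl) (bind_le ν μ (tvDist_comm ν μ))
    _ ≤ 2 * (R - 1) := by grw [Real.log_le_sub_one_of_pos (by linarith)]
    _ = (1 / ε ^ 2 - 1) * tvDist μ ν := by rw [hR_def]; ring
    _ ≤ 1 / ε ^ 2 * tvDist μ ν := by linarith
end

section
/- Let Q be a stochastic kernel from X to Y with Dobrushin coefficient δ(Q), and let μ, ν be two probability measures on X. Then the total variation distance between the induced observation distributions satisfies ‖Qμ − Qν‖_TV ≤ (1 − δ(Q))·‖μ − ν‖_TV, where (Qμ)(B) = ∫ Q(B|x) μ(dx). -/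
open MeasureTheory ProbabilityTheory

/-- Dobrushin coefficient of a kernel `Q`:
`δ(Q) = inf Σᵢ min(Q(x, Aᵢ), Q(y, Aᵢ))`, infimum over all `x, y` and all finite
measurable partitions `{Aᵢ}` of `Y`. -/
noncomputable def dobrushin {X Y : Type*} [MeasurableSpace X] [MeasurableSpace Y]
    (Q : Kernel X Y) : ℝ :=
  sInf {r : ℝ | ∃ (x y : X) (n : ℕ) (A : Fin n → Set Y),
    (∀ i, MeasurableSet (A i)) ∧ Pairwise (Function.onFun Disjoint A) ∧
    (⋃ i, A i) = Set.univ ∧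
    r = ∑ i, min ((Q x) (A i)).toReal ((Q y) (A i)).toReal}

/-! Take a Hahn decomposition `S` for `μ - ν` and a measurable `B ⊆ Y`. Testing `δ(Q)` against the
partition `{B, Bᶜ}` shows that `x ↦ Q(x, B)` has oscillation at most `1 - δ(Q)`. Since
`Qμ(B) - Qν(B)` is the integral of this function against `μ - ν`, whose positive and negative parts
both have mass `μ(S) - ν(S)`, we get `|Qμ(B) - Qν(B)| ≤ (1 - δ(Q)) (μ(S) - ν(S))`, and
`2 (μ(S) - ν(S)) ≤ ‖μ - ν‖_TV`. -/

open Set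

namespace MeasureTheory

variable {X : Type*} [MeasurableSpace X]

lemma Measure.restrict_le_restrict_of_forall_subset {μ ν : Measure X} {S : Set X}
    (hS : MeasurableSet S) (h : ∀ t, MeasurableSet t → t ⊆ S → μ t ≤ ν t) :
    μ.restrict S ≤ ν.restrict S :=
  Measure.le_iff.2 fun t ht => by
    rw [Measure.restrict_apply ht, Measure.restrict_apply ht]
    exact h _ (ht.inter hS) inter_subset_right

lemma integral_sub_integral_le_of_hahn {μ ν : Measure X} [IsFiniteMeasure μ] [IsFiniteMeasure ν]
    (hmass : μ univ = ν univ) {S : Set X} (hS : MeasurableSet S)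
    (hνμ : ν.restrict S ≤ μ.restrict S) (hμν : μ.restrict Sᶜ ≤ ν.restrict Sᶜ)
    {g : X → ℝ} (hg : Measurable g) {c d : ℝ} (hc : ∀ x, c ≤ g x) (hd : ∀ x, g x ≤ d) :
    ∫ x, g x ∂μ - ∫ x, g x ∂ν ≤ (d - c) * (μ.real S - ν.real S) := by
  have hint : ∀ (κ : Measure X) [IsFiniteMeasure κ], Integrable g κ := fun κ _ =>
    .of_bound hg.aestronglyMeasurable (max |c| |d|) (.of_forall fun x =>
      abs_le_max_abs_abs (hc x) (hd x))
  have hS' : ∫ x in S, d - g x ∂ν ≤ ∫ x in S, d - g x ∂μ :=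
    integral_mono_measure hνμ (.of_forall fun x => sub_nonneg.2 (hd x))
      ((integrable_const d).sub (hint _))
  have hSc : ∫ x in Sᶜ, g x - c ∂μ ≤ ∫ x in Sᶜ, g x - c ∂ν :=
    integral_mono_measure hμν (.of_forall fun x => sub_nonneg.2 (hc x))
      ((hint _).sub (integrable_const c))
  rw [integral_sub (integrable_const d) (hint _), integral_sub (integrable_const d) (hint _),
    setIntegral_const, setIntegral_const] at hS'
  rw [integral_sub (hint _) (integrable_const c), integral_sub (hint _) (integrable_const c),
    setIntegral_const, setIntegral_const, measureReal_compl hS, measureReal_compl hS,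
    measureReal_def μ univ, measureReal_def ν univ, hmass] at hSc
  rw [← integral_add_compl hS (hint μ), ← integral_add_compl hS (hint ν)]
  simp only [smul_eq_mul] at hS' hSc
  linear_combination hS' + hSc

lemma abs_integral_sub_integral_le_of_hahn {μ ν : Measure X} [IsFiniteMeasure μ]
    [IsFiniteMeasure ν] (hmass : μ univ = ν univ) {S : Set X} (hS : MeasurableSet S)
    (hνμ : ν.restrict S ≤ μ.restrict S) (hμν : μ.restrict Sᶜ ≤ ν.restrict Sᶜ)
    {g : X → ℝ} (hg : Measurable g) {ε : ℝ} (hosc : ∀ x y, g x - g y ≤ ε) :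
    |∫ x, g x ∂μ - ∫ x, g x ∂ν| ≤ ε * (μ.real S - ν.real S) := by
  have hc : ∀ x, ⨅ y, g y ≤ g x := fun x =>
    ciInf_le ⟨g x - ε, by rintro _ ⟨y, rfl⟩; linarith [hosc x y]⟩ x
  have hd : ∀ x, g x ≤ (⨅ y, g y) + ε := fun x => by
    have : Nonempty X := ⟨x⟩
    linarith [le_ciInf fun y => show g x - ε ≤ g y by linarith [hosc x y]]
  have hmass' : ν.real Sᶜ - μ.real Sᶜ = μ.real S - ν.real S := by
    rw [measureReal_compl hS, measureReal_compl hS, measureReal_def μ univ,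
      measureReal_def ν univ, hmass]
    ring
  rw [abs_sub_le_iff]
  constructor
  · simpa using integral_sub_integral_le_of_hahn hmass hS hνμ hμν hg hc hd
  · rw [← compl_compl S] at hνμ
    simpa [hmass'] using integral_sub_integral_le_of_hahn hmass.symm hS.compl hμν hνμ hg hc hd

end MeasureTheory

section Dobrushin

variable {X Y : Type*} [MeasurableSpace X] [MeasurableSpace Y]

lemma dobrushin_le_sum_min (Q : Kernel X Y) (x y : X) {n : ℕ} {A : Fin n → Set Y}
    (hA : ∀ i, MeasurableSet (A i)) (hdisj : Pairwise (Function.onFun Disjoint A))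
    (hcover : ⋃ i, A i = univ) :
    dobrushin Q ≤ ∑ i, min ((Q x) (A i)).toReal ((Q y) (A i)).toReal :=
  csInf_le ⟨0, by
      rintro r ⟨x, y, n, A, -, -, -, rfl⟩
      exact Finset.sum_nonneg fun i _ => le_min ENNReal.toReal_nonneg ENNReal.toReal_nonneg⟩
    ⟨x, y, n, A, hA, hdisj, hcover, rfl⟩

lemma dobrushin_le_min_add_min_compl (Q : Kernel X Y) (x y : X) {B : Set Y}
    (hB : MeasurableSet B) :
    dobrushin Q ≤ min ((Q x).real B) ((Q y).real B) + min ((Q x).real Bᶜ) ((Q y).real Bᶜ) := by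
  have hdisj : Pairwise (Function.onFun Disjoint ![B, Bᶜ]) := by
    intro i j hij
    fin_cases i <;> fin_cases j <;> simp_all [Function.onFun, disjoint_compl_right,
      disjoint_compl_left]
  simpa [Fin.sum_univ_two, measureReal_def] using dobrushin_le_sum_min Q x y
    (A := ![B, Bᶜ]) (by simp [Fin.forall_fin_two, hB, hB.compl]) hdisj
    (by simp [Fin.exists_fin_two, iUnion_eq_univ_iff, em])

lemma measureReal_sub_le_one_sub_dobrushin (Q : Kernel X Y) [IsMarkovKernel Q] (x y : X)
    {B : Set Y} (hB : MeasurableSet B) :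
    (Q x).real B - (Q y).real B ≤ 1 - dobrushin Q := by
  have := dobrushin_le_min_add_min_compl Q x y hB
  rw [probReal_compl_eq_one_sub hB, probReal_compl_eq_one_sub hB] at this
  linarith [min_le_right ((Q x).real B) ((Q y).real B),
    min_le_left (1 - (Q x).real B) (1 - (Q y).real B)]

end Dobrushin

lemma MeasureTheory.Measure.measureReal_bind_eq_integral {X Y : Type*} [MeasurableSpace X]
    [MeasurableSpace Y] (μ : Measure X) (Q : Kernel X Y) [IsFiniteKernel Q] {B : Set Y}
    (hB : MeasurableSet B) : (μ.bind Q).real B = ∫ x, (Q x).real B ∂μ := by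
  rw [measureReal_def, Measure.bind_apply hB Q.aemeasurable,
    ← integral_toReal (Q.measurable_coe hB).aemeasurable (.of_forall fun x => measure_lt_top _ _)]
  rfl

section TotalVariation

variable {X : Type*} [MeasurableSpace X]

lemma tvDist_le_of_forall_abs_le {μ ν : Measure X} {r : ℝ}
    (h : ∀ B, MeasurableSet B → |μ.real B - ν.real B| ≤ r) : tvDist μ ν ≤ 2 * r := by
  have : Nonempty {B : Set X // MeasurableSet B} := ⟨⟨univ, .univ⟩⟩
  exact mul_le_mul_of_nonneg_left (ciSup_le fun B => h B.1 B.2) zero_le_two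

lemma two_mul_abs_le_tvDist (μ ν : Measure X) [IsFiniteMeasure μ] [IsFiniteMeasure ν]
    {A : Set X} (hA : MeasurableSet A) : 2 * |μ.real A - ν.real A| ≤ tvDist μ ν := by
  refine mul_le_mul_of_nonneg_left (le_ciSup (f := fun B : {B : Set X // MeasurableSet B} =>
    |μ.real B.1 - ν.real B.1|) ⟨μ.real univ + ν.real univ, ?_⟩ ⟨A, hA⟩) zero_le_two
  rintro _ ⟨B, rfl⟩
  have := measureReal_mono (μ := μ) (subset_univ B.1)
  have := measureReal_mono (μ := ν) (subset_univ B.1)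
  exact abs_sub_le_iff.2 ⟨by linarith [measureReal_nonneg (μ := ν) (s := B.1)],
    by linarith [measureReal_nonneg (μ := μ) (s := B.1)]⟩

end TotalVariation

/-- Dobrushin contraction: `‖Qμ − Qν‖_TV ≤ (1 − δ(Q))·‖μ − ν‖_TV`,
where `(Qμ)(B) = ∫ Q(B|x) μ(dx)`. -/
theorem tv_bind_le_dobrushin {X Y : Type*} [MeasurableSpace X] [MeasurableSpace Y]
    (Q : Kernel X Y) [IsMarkovKernel Q] (μ ν : Measure X)
    [IsProbabilityMeasure μ] [IsProbabilityMeasure ν] :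
    tvDist (μ.bind (fun x => Q x)) (ν.bind (fun x => Q x)) ≤
      (1 - dobrushin Q) * tvDist μ ν := by
  obtain ⟨S, hS, hνμ, hμν⟩ := hahn_decomposition μ ν
  obtain ⟨x₀⟩ := nonempty_of_isProbabilityMeasure μ
  have hδ : 0 ≤ 1 - dobrushin Q := by
    simpa using measureReal_sub_le_one_sub_dobrushin Q x₀ x₀ MeasurableSet.univ
  have hbind : ∀ B, MeasurableSet B → |(μ.bind Q).real B - (ν.bind Q).real B| ≤
      (1 - dobrushin Q) * (μ.real S - ν.real S) := fun B hB => by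
    rw [μ.measureReal_bind_eq_integral Q hB, ν.measureReal_bind_eq_integral Q hB]
    exact abs_integral_sub_integral_le_of_hahn (by simp) hS
      (Measure.restrict_le_restrict_of_forall_subset hS hνμ)
      (Measure.restrict_le_restrict_of_forall_subset hS.compl hμν)
      (Q.measurable_coe hB).ennreal_toReal
      fun x y => measureReal_sub_le_one_sub_dobrushin Q x y hB
  calc tvDist (μ.bind Q) (ν.bind Q)
      ≤ 2 * ((1 - dobrushin Q) * (μ.real S - ν.real S)) := tvDist_le_of_forall_abs_le hbind
    _ ≤ (1 - dobrushin Q) * (2 * |μ.real S - ν.real S|) := by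
      rw [mul_left_comm]; gcongr; exact le_abs_self _
    _ ≤ (1 - dobrushin Q) * tvDist μ ν := by gcongr; exact two_mul_abs_le_tvDist μ ν hS
end

section
/- Let V, V' : S → ℝ be bounded functions on a set S satisfying, for every s ∈ S, V(s) = min_{u∈U}(c(s,u) + β·Σ_{s'} V(T(s,u,s'))·η(s'|s,u)) and V'(s) = min_{u∈U}(c'(s,u) + β·Σ_{s'} V'(s')·η'(s'|s,u)) where U is finite, β ∈ (0,1), η, η' are probability distributions over a finite set of successor indices, and c, c' are bounded. Then |V(s) − V'(s)| ≤ (1/(1−β))·sup_{s,u}(|c(s,u) − c'(s,u)| + β·‖V'‖_∞·‖η(·|s,u) − η'(·|s,u)‖_TV). -/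
/-- Comparison of two discounted dynamic-programming fixed points with a common
finite action set `U` and finitely many successors indexed by `I`:
`|V(s) − V'(s)| ≤ (1/(1−β))·sup_{s,u}(|c(s,u)−c'(s,u)| + β‖V'‖_∞‖η(·|s,u)−η'(·|s,u)‖_TV)`. -/
theorem value_function_comparison {S U I : Type*} [Fintype U] [Nonempty U]
    [Fintype I] [Nonempty S]
    (β : ℝ) (hβ0 : 0 < β) (hβ1 : β < 1)
    (c c' : S → U → ℝ) (η η' : S → U → I → ℝ) (succ : S → U → I → S)
    (hηpos : ∀ s u i, 0 ≤ η s u i) (hηsum : ∀ s u, ∑ i : I, η s u i = 1)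
    (hη'pos : ∀ s u i, 0 ≤ η' s u i) (hη'sum : ∀ s u, ∑ i : I, η' s u i = 1)
    (hcb : ∃ M, ∀ s u, |c s u| ≤ M) (hc'b : ∃ M, ∀ s u, |c' s u| ≤ M)
    (V V' : S → ℝ)
    (hVb : ∃ M, ∀ s, |V s| ≤ M) (hV'b : ∃ M, ∀ s, |V' s| ≤ M)
    (hV : ∀ s, V s = ⨅ u : U, (c s u + β * ∑ i : I, V (succ s u i) * η s u i))
    (hV' : ∀ s, V' s = ⨅ u : U, (c' s u + β * ∑ i : I, V' (succ s u i) * η' s u i)) :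
    ∀ s : S, |V s - V' s| ≤ (1 / (1 - β)) *
      ⨆ p : S × U, (|c p.1 p.2 - c' p.1 p.2| +
        β * (⨆ s' : S, |V' s'|) * ∑ i : I, |η p.1 p.2 i - η' p.1 p.2 i|) := by
  obtain ⟨Mc, hMc⟩ := hcb
  obtain ⟨Mc', hMc'⟩ := hc'b
  obtain ⟨MV, hMV⟩ := hVb
  obtain ⟨MV', hMV'⟩ := hV'b
  set W := ⨆ s' : S, |V' s'| with hWdef
  have hWbdd : BddAbove (Set.range fun s' : S => |V' s'|) :=
    ⟨MV', by rintro _ ⟨s, rfl⟩; exact hMV' s⟩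
  have hWle : ∀ s, |V' s| ≤ W := fun s => le_ciSup hWbdd s
  have hW0 : 0 ≤ W := le_trans (abs_nonneg _) (hWle (Classical.arbitrary S))
  set F : S × U → ℝ := fun p => |c p.1 p.2 - c' p.1 p.2| +
      β * W * ∑ i : I, |η p.1 p.2 i - η' p.1 p.2 i| with hFdef
  have hsum2 : ∀ (s : S) (u : U), ∑ i : I, |η s u i - η' s u i| ≤ 2 := by
    intro s u
    have h : ∀ i : I, |η s u i - η' s u i| ≤ η s u i + η' s u i := by
      intro i
      have h1 := hηpos s u i
      have h2 := hη'pos s u i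
      exact abs_le.mpr ⟨by linarith, by linarith⟩
    calc ∑ i : I, |η s u i - η' s u i| ≤ ∑ i : I, (η s u i + η' s u i) :=
          Finset.sum_le_sum fun i _ => h i
      _ = 2 := by rw [Finset.sum_add_distrib, hηsum, hη'sum]; ring
  have hFbdd : BddAbove (Set.range F) := by
    refine ⟨Mc + Mc' + β * W * 2, ?_⟩
    rintro _ ⟨p, rfl⟩
    have h1 : |c p.1 p.2 - c' p.1 p.2| ≤ Mc + Mc' := by
      have := hMc p.1 p.2; have := hMc' p.1 p.2
      have := abs_sub_abs_le_abs_sub (c p.1 p.2) (c' p.1 p.2)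
      have habs : |c p.1 p.2 - c' p.1 p.2| ≤ |c p.1 p.2| + |c' p.1 p.2| :=
        abs_sub (c p.1 p.2) (c' p.1 p.2)
      linarith [abs_nonneg (c' p.1 p.2)]
    have h2 := hsum2 p.1 p.2
    have hβW : 0 ≤ β * W := mul_nonneg hβ0.le hW0
    have := mul_le_mul_of_nonneg_left h2 hβW
    simp only [hFdef]
    linarith
  set K := ⨆ p : S × U, F p with hKdef
  have hKle : ∀ p : S × U, F p ≤ K := fun p => le_ciSup hFbdd p
  set D := ⨆ s : S, |V s - V' s| with hDdef
  have hDbdd : BddAbove (Set.range fun s : S => |V s - V' s|) := by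
    refine ⟨MV + MV', ?_⟩
    rintro _ ⟨s, rfl⟩
    have : |V s - V' s| ≤ |V s| + |V' s| := abs_sub (V s) (V' s)
    linarith [hMV s, hMV' s]
  have hDle : ∀ s, |V s - V' s| ≤ D := fun s => le_ciSup hDbdd s
  have hD0 : 0 ≤ D := le_trans (abs_nonneg _) (hDle (Classical.arbitrary S))
  -- main contraction estimate
  have main : ∀ s : S, |V s - V' s| ≤ K + β * D := by
    intro s
    set f : U → ℝ := fun u => c s u + β * ∑ i : I, V (succ s u i) * η s u i with hfdef
    set g : U → ℝ := fun u => c' s u + β * ∑ i : I, V' (succ s u i) * η' s u i with hgdef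
    have hfg : ∀ u : U, |f u - g u| ≤ K + β * D := by
      intro u
      have key : ∑ i : I, V (succ s u i) * η s u i - ∑ i : I, V' (succ s u i) * η' s u i
          = ∑ i : I, (V (succ s u i) - V' (succ s u i)) * η s u i
            + ∑ i : I, V' (succ s u i) * (η s u i - η' s u i) := by
        rw [← Finset.sum_add_distrib, ← Finset.sum_sub_distrib]
        apply Finset.sum_congr rfl
        intro i _; ring
      have b1 : |∑ i : I, (V (succ s u i) - V' (succ s u i)) * η s u i| ≤ D := by
        calc |∑ i : I, (V (succ s u i) - V' (succ s u i)) * η s u i|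
            ≤ ∑ i : I, |(V (succ s u i) - V' (succ s u i)) * η s u i| :=
              Finset.abs_sum_le_sum_abs _ _
          _ ≤ ∑ i : I, D * η s u i := by
              apply Finset.sum_le_sum
              intro i _
              rw [abs_mul, abs_of_nonneg (hηpos s u i)]
              exact mul_le_mul_of_nonneg_right (hDle _) (hηpos s u i)
          _ = D := by rw [← Finset.mul_sum, hηsum, mul_one]
      have b2 : |∑ i : I, V' (succ s u i) * (η s u i - η' s u i)|
          ≤ W * ∑ i : I, |η s u i - η' s u i| := by
        calc |∑ i : I, V' (succ s u i) * (η s u i - η' s u i)|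
            ≤ ∑ i : I, |V' (succ s u i) * (η s u i - η' s u i)| :=
              Finset.abs_sum_le_sum_abs _ _
          _ ≤ ∑ i : I, W * |η s u i - η' s u i| := by
              apply Finset.sum_le_sum
              intro i _
              rw [abs_mul]
              exact mul_le_mul_of_nonneg_right (hWle _) (abs_nonneg _)
          _ = W * ∑ i : I, |η s u i - η' s u i| := by rw [Finset.mul_sum]
      have hsplit : f u - g u = (c s u - c' s u)
          + β * (∑ i : I, (V (succ s u i) - V' (succ s u i)) * η s u i
            + ∑ i : I, V' (succ s u i) * (η s u i - η' s u i)) := by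
        simp only [hfdef, hgdef]
        rw [← key]; ring
      have hFle := hKle (s, u)
      have habs : |f u - g u| ≤ |c s u - c' s u|
          + β * (D + W * ∑ i : I, |η s u i - η' s u i|) := by
        rw [hsplit]
        calc |(c s u - c' s u) + β * (∑ i : I, (V (succ s u i) - V' (succ s u i)) * η s u i
              + ∑ i : I, V' (succ s u i) * (η s u i - η' s u i))|
            ≤ |c s u - c' s u| + |β * (∑ i : I, (V (succ s u i) - V' (succ s u i)) * η s u i
              + ∑ i : I, V' (succ s u i) * (η s u i - η' s u i))| := abs_add_le _ _
          _ ≤ |c s u - c' s u| + β * (D + W * ∑ i : I, |η s u i - η' s u i|) := by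
              rw [abs_mul, abs_of_pos hβ0]
              have := abs_add_le (∑ i : I, (V (succ s u i) - V' (succ s u i)) * η s u i)
                (∑ i : I, V' (succ s u i) * (η s u i - η' s u i))
              have h' : |∑ i : I, (V (succ s u i) - V' (succ s u i)) * η s u i
                  + ∑ i : I, V' (succ s u i) * (η s u i - η' s u i)|
                  ≤ D + W * ∑ i : I, |η s u i - η' s u i| := by linarith
              nlinarith [mul_le_mul_of_nonneg_left h' hβ0.le]
      have hFval : F (s, u) = |c s u - c' s u|
          + β * W * ∑ i : I, |η s u i - η' s u i| := rfl
      have : |c s u - c' s u| + β * (D + W * ∑ i : I, |η s u i - η' s u i|)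
          = F (s, u) + β * D := by rw [hFval]; ring
      linarith
    have hbf : BddBelow (Set.range f) := (Set.finite_range f).bddBelow
    have hbg : BddBelow (Set.range g) := (Set.finite_range g).bddBelow
    have h1 : V s ≤ V' s + (K + β * D) := by
      rw [hV s, hV' s]
      have : ∀ u : U, (⨅ u : U, f u) - (K + β * D) ≤ g u := by
        intro u
        have h := (ciInf_le hbf u)
        have h2 := hfg u
        have h3 : f u - g u ≤ K + β * D := (le_abs_self _).trans h2
        linarith
      have := le_ciInf this
      linarith
    have h2 : V' s ≤ V s + (K + β * D) := by
      rw [hV s, hV' s]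
      have : ∀ u : U, (⨅ u : U, g u) - (K + β * D) ≤ f u := by
        intro u
        have h := (ciInf_le hbg u)
        have h2 := hfg u
        have h3 : g u - f u ≤ K + β * D := (le_abs_self _).trans (by rw [abs_sub_comm]; exact h2)
        linarith
      have := le_ciInf this
      linarith
    exact abs_le.mpr ⟨by linarith, by linarith⟩
  have hDK : D ≤ K + β * D := ciSup_le main
  have hfinal : D ≤ (1 / (1 - β)) * K := by
    rw [div_mul_eq_mul_div, one_mul, le_div_iff₀ (by linarith : (0:ℝ) < 1 - β)]
    nlinarith
  intro s
  exact (hDle s).trans hfinal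
end

section
/- Let (X,d) be a compact metric space, Q a stochastic kernel from X to a space Y, and T a stochastic kernel from X×U to X with ‖T(·|x,u) − T(·|x',u)‖_TV ≤ α·d(x,x') for all x,x',u. Define for probability measures z on X and u ∈ U the observation-prediction kernel P(B|z,u) = ∫∫ Q(B|x₁) T(dx₁|x₀,u) z(dx₀). Then for any two probability measures z, z' on X and any u: ‖P(·|z,u) − P(·|z',u)‖_TV ≤ α·W₁(z, z'). -/
/-!
For a test function `g` with `|g| ≤ 1`, `∫ g dP(·|z,u) = ∫ h dz` where
`h x = ∫∫ g dQ(·|x₁) T(dx₁|x,u)`. The inner integral `x₁ ↦ ∫ g dQ(·|x₁)` is again a test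
function, so the total variation hypothesis on `T` makes `h` an `α`-Lipschitz function, and the
Kantorovich–Rubinstein form of `W₁` bounds `∫ h dz − ∫ h dz'` by `α W₁(z, z')`. Compactness of `X`
is what keeps the supremum defining `W₁` finite, so that it dominates each of its terms.
-/

open MeasureTheory ProbabilityTheory

/-- Total variation distance in functional form. -/
noncomputable def tvDistF {X : Type*} [MeasurableSpace X] (μ ν : Measure X) : ℝ :=
  ⨆ g : {g : X → ℝ // Measurable g ∧ ∀ x, |g x| ≤ 1},
    |∫ x, g.1 x ∂μ - ∫ x, g.1 x ∂ν|

/-- Wasserstein-1 distance. -/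
noncomputable def wass1 {X : Type*} [MetricSpace X] [MeasurableSpace X] (μ ν : Measure X) : ℝ :=
  ⨆ f : {f : X → ℝ // LipschitzWith 1 f}, ((∫ x, f.1 x ∂μ) - ∫ x, f.1 x ∂ν)

/-- One-step observation prediction: `P(B|z,u) = ∫∫ Q(B|x₁) T(dx₁|x₀,u) z(dx₀)`. -/
noncomputable def obsPred {X Y U : Type*} [MeasurableSpace X] [MeasurableSpace Y]
    (Q : Kernel X Y) (T : X → U → Measure X) (z : Measure X) (u : U) : Measure Y :=
  (z.bind (fun x₀ => T x₀ u)).bind (fun x₁ => Q x₁)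

open Set
open scoped NNReal

namespace MeasureTheory.Measure

theorem integral_bind {α β E : Type*} [MeasurableSpace α] [MeasurableSpace β]
    [NormedAddCommGroup E] [NormedSpace ℝ E] {μ : Measure α} {κ : Kernel α β} {f : β → E}
    (hf : Integrable f (μ.bind κ)) :
    ∫ b, f b ∂(μ.bind κ) = ∫ a, ∫ b, f b ∂κ a ∂μ :=
  Kernel.integral_comp (κ := Kernel.const Unit μ) (a := ()) hf

end MeasureTheory.Measure

section Integral

variable {X : Type*} [MeasurableSpace X]

theorem abs_integral_le_of_abs_le (μ : Measure X) [IsProbabilityMeasure μ] {g : X → ℝ} {C : ℝ}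
    (hg : ∀ x, |g x| ≤ C) : |∫ x, g x ∂μ| ≤ C := by
  simpa using norm_integral_le_of_norm_le_const (μ := μ) (f := g) (ae_of_all _ hg)

theorem abs_integral_sub_le_tvDistF {μ ν : Measure X} [IsFiniteMeasure μ] [IsFiniteMeasure ν]
    {g : X → ℝ} (hg : Measurable g) (hg₁ : ∀ x, |g x| ≤ 1) :
    |∫ x, g x ∂μ - ∫ x, g x ∂ν| ≤ tvDistF μ ν := by
  refine le_ciSup (f := fun g : {g : X → ℝ // Measurable g ∧ ∀ x, |g x| ≤ 1} =>
    |∫ x, g.1 x ∂μ - ∫ x, g.1 x ∂ν|) ⟨μ.real univ + ν.real univ, ?_⟩ ⟨g, hg, hg₁⟩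
  rintro _ ⟨⟨g', -, hg'₁⟩, rfl⟩
  have hμ := norm_integral_le_of_norm_le_const (μ := μ) (f := g') (ae_of_all _ hg'₁)
  have hν := norm_integral_le_of_norm_le_const (μ := ν) (f := g') (ae_of_all _ hg'₁)
  simp only [Real.norm_eq_abs, one_mul] at hμ hν
  exact (abs_sub _ _).trans (add_le_add hμ hν)

theorem lipschitzWith_integral_of_tvDistF_le {X X' : Type*} [PseudoMetricSpace X]
    [MeasurableSpace X'] {κ : X → Measure X'} [∀ x, IsFiniteMeasure (κ x)] {α : ℝ}
    (hκ : ∀ x x', tvDistF (κ x) (κ x') ≤ α * dist x x') {g : X' → ℝ} (hg : Measurable g)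
    (hg₁ : ∀ y, |g y| ≤ 1) :
    LipschitzWith (Real.toNNReal α) fun x => ∫ y, g y ∂κ x :=
  LipschitzWith.of_dist_le' fun x x' => (abs_integral_sub_le_tvDistF hg hg₁).trans (hκ x x')

end Integral

section Wasserstein

variable {X : Type*} [MetricSpace X] [BoundedSpace X] [MeasurableSpace X]
  [OpensMeasurableSpace X]

theorem LipschitzWith.integrable_of_boundedSpace {K : ℝ≥0} {f : X → ℝ} (hf : LipschitzWith K f)
    (μ : Measure X) [IsFiniteMeasure μ] : Integrable f μ := by
  obtain ⟨C, hC⟩ := isBounded_iff_forall_norm_le.1 (hf.isBounded_image BoundedSpace.bounded_univ)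
  exact .of_bound hf.continuous.aestronglyMeasurable C
    (ae_of_all _ fun x => hC _ (mem_image_of_mem f (mem_univ x)))

theorem abs_integral_sub_le_diam {f : X → ℝ} (hf : LipschitzWith 1 f) (μ : Measure X)
    [IsProbabilityMeasure μ] (x₀ : X) : |∫ x, f x ∂μ - f x₀| ≤ Metric.diam (univ : Set X) := by
  have hdist : ∀ x, |f x - f x₀| ≤ Metric.diam (univ : Set X) := fun x =>
    calc |f x - f x₀| ≤ 1 * dist x x₀ := hf.dist_le_mul x x₀
      _ ≤ Metric.diam (univ : Set X) := by
        rw [one_mul]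
        exact Metric.dist_le_diam_of_mem BoundedSpace.bounded_univ (mem_univ x) (mem_univ x₀)
  have hsub : ∫ x, f x ∂μ - f x₀ = ∫ x, (f x - f x₀) ∂μ := by
    rw [integral_sub (hf.integrable_of_boundedSpace μ) (integrable_const _), integral_const,
      probReal_univ, one_smul]
  exact hsub ▸ abs_integral_le_of_abs_le μ hdist

theorem bddAbove_range_integral_sub_integral (μ ν : Measure X) [IsProbabilityMeasure μ]
    [IsProbabilityMeasure ν] :
    BddAbove (range fun f : {f : X → ℝ // LipschitzWith 1 f} => ∫ x, f.1 x ∂μ - ∫ x, f.1 x ∂ν) := by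
  obtain ⟨x₀⟩ := nonempty_of_isProbabilityMeasure μ
  refine ⟨2 * Metric.diam (univ : Set X), ?_⟩
  rintro _ ⟨⟨f, hf⟩, rfl⟩
  have hμ := abs_le.1 (abs_integral_sub_le_diam hf μ x₀)
  have hν := abs_le.1 (abs_integral_sub_le_diam hf ν x₀)
  dsimp only
  linarith [hμ.2, hν.1]

variable (μ ν : Measure X) [IsProbabilityMeasure μ] [IsProbabilityMeasure ν]

theorem abs_integral_sub_le_wass1 {f : X → ℝ} (hf : LipschitzWith 1 f) :
    |∫ x, f x ∂μ - ∫ x, f x ∂ν| ≤ wass1 μ ν := by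
  refine abs_sub_le_iff.2 ⟨le_ciSup (bddAbove_range_integral_sub_integral μ ν) ⟨f, hf⟩, ?_⟩
  have : _ ≤ wass1 μ ν := le_ciSup (bddAbove_range_integral_sub_integral μ ν) ⟨-f, hf.neg⟩
  simp only [Pi.neg_apply, integral_neg] at this
  linarith

theorem LipschitzWith.abs_integral_sub_le_mul_wass1 {K : ℝ≥0} {f : X → ℝ}
    (hf : LipschitzWith K f) : |∫ x, f x ∂μ - ∫ x, f x ∂ν| ≤ K * wass1 μ ν := by
  rcases eq_or_ne K 0 with rfl | hK
  · obtain ⟨x₀⟩ := nonempty_of_isProbabilityMeasure μ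
    have hconst : f = fun _ => f x₀ := funext fun x => (LipschitzWith.zero_iff f).1 hf x x₀
    rw [hconst]
    simp
  · have hscaled : LipschitzWith 1 fun x => (K : ℝ)⁻¹ * f x := by
      refine .of_dist_le_mul fun x y => ?_
      rw [Real.dist_eq, ← mul_sub, abs_mul, abs_of_pos (by positivity), NNReal.coe_one, one_mul,
        inv_mul_le_iff₀ (by positivity)]
      exact hf.dist_le_mul x y
    have := abs_integral_sub_le_wass1 μ ν hscaled
    rwa [integral_const_mul, integral_const_mul, ← mul_sub, abs_mul, abs_of_pos (by positivity),
      inv_mul_le_iff₀ (by positivity)] at this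

end Wasserstein

theorem integral_obsPred {X Y U : Type*} [MeasurableSpace X] [MeasurableSpace Y]
    (Q : Kernel X Y) [IsMarkovKernel Q] {T : X → U → Measure X} {u : U}
    (hT : ∀ x, IsProbabilityMeasure (T x u)) (hTmeas : Measurable fun x => T x u)
    (z : Measure X) [IsFiniteMeasure z] {g : Y → ℝ} (hg : Measurable g) {C : ℝ}
    (hgC : ∀ y, |g y| ≤ C) :
    ∫ y, g y ∂obsPred Q T z u = ∫ x₀, ∫ x₁, ∫ y, g y ∂Q x₁ ∂T x₀ u ∂z := by
  let Tu : Kernel X X := ⟨fun x => T x u, hTmeas⟩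
  have : IsMarkovKernel Tu := ⟨hT⟩
  have hgQ : Measurable fun x₁ => ∫ y, g y ∂Q x₁ := hg.stronglyMeasurable.integral_kernel.measurable
  calc ∫ y, g y ∂(Q ∘ₘ (Tu ∘ₘ z)) = ∫ x₁, ∫ y, g y ∂Q x₁ ∂(Tu ∘ₘ z) :=
        Measure.integral_bind (.of_bound hg.aestronglyMeasurable C (ae_of_all _ hgC))
    _ = ∫ x₀, ∫ x₁, ∫ y, g y ∂Q x₁ ∂T x₀ u ∂z :=
        Measure.integral_bind (.of_bound hgQ.aestronglyMeasurable C
          (ae_of_all _ fun x₁ => abs_integral_le_of_abs_le (Q x₁) hgC))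

/-- If `‖T(·|x,u) − T(·|x',u)‖_TV ≤ α·d(x,x')`, then for any two beliefs `z, z'` and
any `u`: `‖P(·|z,u) − P(·|z',u)‖_TV ≤ α·W₁(z, z')`. -/
theorem tv_obsPred_le_wass {X Y U : Type*} [MetricSpace X] [CompactSpace X]
    [MeasurableSpace X] [BorelSpace X] [MeasurableSpace Y]
    (Q : Kernel X Y) [IsMarkovKernel Q]
    (T : X → U → Measure X) (hT : ∀ x u, IsProbabilityMeasure (T x u))
    (hTmeas : ∀ u : U, Measurable (fun x => T x u))
    (α : ℝ) (hα : 0 ≤ α)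
    (hTLip : ∀ (x x' : X) (u : U), tvDistF (T x u) (T x' u) ≤ α * dist x x')
    (z z' : Measure X) [IsProbabilityMeasure z] [IsProbabilityMeasure z'] (u : U) :
    tvDistF (obsPred Q T z u) (obsPred Q T z' u) ≤ α * wass1 z z' := by
  have : Nonempty {g : Y → ℝ // Measurable g ∧ ∀ y, |g y| ≤ 1} :=
    ⟨⟨0, measurable_const, by simp⟩⟩
  refine ciSup_le fun ⟨g, hg, hg₁⟩ => ?_
  have hgQ : Measurable fun x₁ => ∫ y, g y ∂Q x₁ := hg.stronglyMeasurable.integral_kernel.measurable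
  have hLip : LipschitzWith (Real.toNNReal α) fun x₀ => ∫ x₁, ∫ y, g y ∂Q x₁ ∂T x₀ u :=
    lipschitzWith_integral_of_tvDistF_le (fun x x' => hTLip x x' u) hgQ
      fun x₁ => abs_integral_le_of_abs_le (Q x₁) hg₁
  rw [integral_obsPred Q (hT · u) (hTmeas u) z hg hg₁,
    integral_obsPred Q (hT · u) (hTmeas u) z' hg hg₁]
  simpa [Real.coe_toNNReal α hα] using hLip.abs_integral_sub_le_mul_wass1 z z'
end
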